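/- For all real t with 0 < t < 1, one has π/2 − 2·∑_{i=1}^∞ t^{2i}/((2i−1)(4i+1)) < E(t) < π/2 − ∑_{i=1}^∞ t^{2i}/((2i−1)(2i+1)). -/

import Mathlib

/-!
With `c n = (2n choose n) / 4ⁿ`, the Catalan generating function gives
`1 - √(1 - x) = ∑ c (n+1) / (2n+1) · x^(n+1)`, and `∫₀^{π/2} sin^(2n) = (π/2) c n`, so
integrating termwise yields `π/2 - E(t) = ∑_{i ≥ 1} (π/2) c i² / (2i - 1) · t^(2i)`.
The theorem then follows term by term from the Wallis-type bounds `2 < π c i² (2i + 1)` and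
`π c i² (4i + 1) < 4`. The first is `W i < π/2` for the Wallis product
`W i = 1 / (c i² (2i + 1))`; for the second, `π c i² (4i + 1)` increases strictly to its
limit `4`.
-/

open Real Finset Filter MeasureTheory intervalIntegral
open scoped Topology

section CatalanSeries

variable {y : ℝ}

lemma catalan_succ_mul_pow_succ_eq_sum (y : ℝ) (n : ℕ) :
    (catalan (n + 1) : ℝ) * y ^ (n + 1 + 1) =
      ∑ k ∈ range (n + 1), catalan k * y ^ (k + 1) * (catalan (n - k) * y ^ (n - k + 1)) := by
  rw [catalan_succ, Fin.sum_univ_eq_sum_range (fun k => catalan k * catalan (n - k)),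
    Nat.cast_sum, sum_mul]
  refine sum_congr rfl fun k hk => ?_
  obtain ⟨j, rfl⟩ := Nat.exists_eq_add_of_le (mem_range_succ_iff.mp hk)
  rw [Nat.add_sub_cancel_left]
  push_cast
  ring

lemma sum_range_catalan_succ_mul_pow_le_sq (hy : 0 ≤ y) (N : ℕ) :
    ∑ n ∈ range N, (catalan (n + 1) : ℝ) * y ^ (n + 1 + 1) ≤
      (∑ n ∈ range N, (catalan n : ℝ) * y ^ (n + 1)) ^ 2 := by
  set a : ℕ → ℝ := fun n => catalan n * y ^ (n + 1)
  calc ∑ n ∈ range N, (catalan (n + 1) : ℝ) * y ^ (n + 1 + 1)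
      = ∑ m ∈ range N, ∑ k ∈ range (N - m), a m * a k := by
        simp_rw [catalan_succ_mul_pow_succ_eq_sum]
        exact sum_range_diag_flip N fun m k => a m * a k
    _ ≤ ∑ m ∈ range N, ∑ k ∈ range N, a m * a k :=
        sum_le_sum fun m _ => sum_le_sum_of_subset_of_nonneg
          (range_subset_range.mpr (Nat.sub_le N m)) fun k _ _ => by positivity
    _ = (∑ n ∈ range N, a n) ^ 2 := by rw [sq, sum_mul_sum]

theorem hasSum_catalan_mul_pow_succ (hy₀ : 0 ≤ y) (hy : y ≤ 1 / 4) :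
    HasSum (fun n => (catalan n : ℝ) * y ^ (n + 1)) ((1 - √(1 - 4 * y)) / 2) := by
  set a : ℕ → ℝ := fun n => catalan n * y ^ (n + 1)
  set s := √(1 - 4 * y)
  have hs : s ^ 2 = 1 - 4 * y := sq_sqrt (by linarith)
  have hs₀ : 0 ≤ s := sqrt_nonneg _
  have ha : ∀ n, 0 ≤ a n := fun n => by positivity
  have hpartial : ∀ N, ∑ n ∈ range N, a n ≤ (1 - s) / 2 := by
    intro N
    induction N with
    | zero => rw [sum_range_zero]; nlinarith
    | succ N ih =>
      calc ∑ n ∈ range (N + 1), a n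
          = ∑ n ∈ range N, (catalan (n + 1) : ℝ) * y ^ (n + 1 + 1) + y := by
            simp [a, sum_range_succ']
        _ ≤ (∑ n ∈ range N, a n) ^ 2 + y := by
            gcongr; exact sum_range_catalan_succ_mul_pow_le_sq hy₀ N
        _ ≤ ((1 - s) / 2) ^ 2 + y := by gcongr
        _ = (1 - s) / 2 := by linear_combination (1 / 4) * hs
  have hsum : Summable a := summable_of_sum_range_le ha hpartial
  have hnorm : Summable fun n => ‖a n‖ := hsum.norm
  have hshift : ∑' n, a n = y + ∑' n, a (n + 1) := by simpa [a] using hsum.tsum_eq_zero_add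
  have hsq : (∑' n, a n) ^ 2 = ∑' n, a (n + 1) := by
    rw [sq, tsum_mul_tsum_eq_tsum_sum_range_of_summable_norm hnorm hnorm]
    simp_rw [a, catalan_succ_mul_pow_succ_eq_sum]
  have hle : ∑' n, a n ≤ (1 - s) / 2 := Real.tsum_le_of_sum_range_le ha hpartial
  -- `∑' a` and `(1 - s) / 2` both solve `L = y + L²`, whose other root `(1 + s) / 2` is larger.
  have heq : ∑' n, a n = (1 - s) / 2 := by nlinarith
  exact heq ▸ hsum.hasSum

end CatalanSeries

noncomputable def centralBinomRatio (n : ℕ) : ℝ := n.centralBinom / 4 ^ n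

lemma centralBinomRatio_pos (n : ℕ) : 0 < centralBinomRatio n := by
  unfold centralBinomRatio; have := n.centralBinom_pos; positivity

lemma centralBinomRatio_succ (n : ℕ) :
    centralBinomRatio (n + 1) = centralBinomRatio n * ((2 * n + 1) / (2 * n + 2)) := by
  have h : ((n : ℝ) + 1) * (n + 1).centralBinom = 2 * (2 * n + 1) * n.centralBinom := by
    exact_mod_cast Nat.succ_mul_centralBinom_succ n
  unfold centralBinomRatio
  field_simp
  rw [pow_succ]
  linear_combination 2 * 4 ^ n * h

lemma centralBinomRatio_succ_div (n : ℕ) :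
    centralBinomRatio (n + 1) / (2 * n + 1) = catalan n / (2 * 4 ^ n) := by
  have h : ((n : ℝ) + 1) * catalan n = n.centralBinom := by
    exact_mod_cast succ_mul_catalan_eq_centralBinom n
  rw [centralBinomRatio_succ, centralBinomRatio]
  field_simp
  exact h.symm

lemma centralBinomRatio_eq_prod (n : ℕ) :
    centralBinomRatio n = ∏ i ∈ range n, (2 * (i : ℝ) + 1) / (2 * i + 2) := by
  induction n with
  | zero => simp [centralBinomRatio]
  | succ n ih => rw [centralBinomRatio_succ, ih, prod_range_succ]

lemma integral_sin_pow_even_zero_pi_div_two (n : ℕ) :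
    ∫ x in (0 : ℝ)..π / 2, sin x ^ (2 * n) = π / 2 * centralBinomRatio n := by
  have hint : ∀ a b : ℝ, IntervalIntegrable (fun x => sin x ^ (2 * n)) volume a b :=
    fun a b => (continuous_sin.pow _).intervalIntegrable a b
  have hsymm :
      ∫ x in π / 2..π, sin x ^ (2 * n) = ∫ x in (0 : ℝ)..π / 2, sin x ^ (2 * n) := by
    simpa [sin_pi_sub, show π - π / 2 = π / 2 by ring] using
      (integral_comp_sub_left (fun x => sin x ^ (2 * n)) π (a := 0) (b := π / 2)).symm
  have := integral_add_adjacent_intervals (hint 0 (π / 2)) (hint (π / 2) π)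
  rw [hsymm, integral_sin_pow_even, ← centralBinomRatio_eq_prod] at this
  linarith

namespace Real.Wallis

lemma centralBinomRatio_sq_mul_W (n : ℕ) :
    centralBinomRatio n ^ 2 * ((2 * n + 1) * W n) = 1 := by
  induction n with
  | zero => simp [centralBinomRatio, W]
  | succ n ih =>
    rw [centralBinomRatio_succ, W_succ]
    push_cast
    field_simp
    linear_combination (2 * (n : ℝ) + 3) * ih

lemma W_lt_pi_div_two (n : ℕ) : W n < π / 2 := by
  refine lt_of_lt_of_le ?_ (W_le (n + 1))
  rw [W_succ, lt_mul_iff_one_lt_right (W_pos n), div_mul_div_comm, one_lt_div (by positivity)]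
  nlinarith

end Real.Wallis

open Real.Wallis

lemma two_lt_pi_mul_centralBinomRatio_sq (n : ℕ) :
    2 < π * centralBinomRatio n ^ 2 * (2 * n + 1) := by
  have := mul_lt_mul_of_pos_left (W_lt_pi_div_two n)
    (by have := centralBinomRatio_pos n; positivity : 0 < centralBinomRatio n ^ 2 * (2 * n + 1))
  nlinarith [centralBinomRatio_sq_mul_W n]

lemma pi_mul_centralBinomRatio_sq_lt_four (n : ℕ) :
    π * centralBinomRatio n ^ 2 * (4 * n + 1) < 4 := by
  set A : ℕ → ℝ := fun n => π * centralBinomRatio n ^ 2 * (4 * n + 1)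
  have hmono : StrictMono A := by
    refine strictMono_nat_of_lt_succ fun n => ?_
    have hc := centralBinomRatio_pos n
    have hstep : A (n + 1) - A n = π * centralBinomRatio n ^ 2 / (4 * (n + 1) ^ 2) := by
      simp only [A, centralBinomRatio_succ]
      push_cast
      field_simp
      ring
    have hpos : 0 < π * centralBinomRatio n ^ 2 / (4 * (n + 1) ^ 2) := by positivity
    linarith
  have hlim : Tendsto A atTop (𝓝 4) := by
    have hA : A = fun n => π * ((1 + 4 * n) / (1 + 2 * n)) * (W n)⁻¹ := by
      ext n
      have hW := centralBinomRatio_sq_mul_W n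
      have := W_pos n
      simp only [A]
      field_simp
      linear_combination (4 * (n : ℝ) + 1) * hW
    have := ((tendsto_add_mul_div_add_mul_atTop_nhds (1 : ℝ) 1 4 two_ne_zero).const_mul π).mul
      (tendsto_W_nhds_pi_div_two.inv₀ pi_div_two_pos.ne')
    rw [hA]
    convert this using 2
    field_simp
  exact (hmono (Nat.lt_succ_self n)).trans_le (hmono.monotone.ge_of_tendsto hlim (n + 1))

theorem hasSum_one_sub_sqrt_one_sub {x : ℝ} (hx₀ : 0 ≤ x) (hx₁ : x ≤ 1) :
    HasSum (fun n => centralBinomRatio (n + 1) / (2 * n + 1) * x ^ (n + 1)) (1 - √(1 - x)) := by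
  have hterm : ∀ n : ℕ, centralBinomRatio (n + 1) / (2 * n + 1) * x ^ (n + 1) =
      2 * (catalan n * (x / 4) ^ (n + 1)) := fun n => by
    rw [centralBinomRatio_succ_div, div_pow, pow_succ 4]
    field_simp
    ring
  simp_rw [hterm, show 1 - √(1 - x) = 2 * ((1 - √(1 - 4 * (x / 4))) / 2) by ring_nf]
  exact (hasSum_catalan_mul_pow_succ (by positivity) (by linarith)).mul_left 2

noncomputable def ellipticE (t : ℝ) : ℝ :=
  ∫ θ in (0 : ℝ)..π / 2, √(1 - t ^ 2 * sin θ ^ 2)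

noncomputable def ellipticECoeff (n : ℕ) : ℝ :=
  π / 2 * centralBinomRatio (n + 1) ^ 2 / (2 * n + 1)

theorem hasSum_pi_div_two_sub_ellipticE {t : ℝ} (ht : t ^ 2 ≤ 1) :
    HasSum (fun n => ellipticECoeff n * t ^ (2 * (n + 1))) (π / 2 - ellipticE t) := by
  set a : ℕ → ℝ := fun n => centralBinomRatio (n + 1) / (2 * n + 1)
  have ha : ∀ n, 0 ≤ a n := fun n => by have := centralBinomRatio_pos (n + 1); positivity
  have hx : ∀ θ, t ^ 2 * sin θ ^ 2 ≤ t ^ 2 :=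
    fun θ => mul_le_of_le_one_right (sq_nonneg t) (sin_sq_le_one θ)
  have hF : HasSum (fun n => ∫ θ in (0 : ℝ)..π / 2, a n * (t ^ 2 * sin θ ^ 2) ^ (n + 1))
      (∫ θ in (0 : ℝ)..π / 2, (1 - √(1 - t ^ 2 * sin θ ^ 2))) := by
    refine hasSum_integral_of_dominated_convergence (fun n _ => a n * (t ^ 2) ^ (n + 1))
      (fun n => by fun_prop) (fun n => ae_of_all _ fun θ _ => ?_)
      (ae_of_all _ fun _ _ => (hasSum_one_sub_sqrt_one_sub (sq_nonneg t) ht).summable)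
      intervalIntegrable_const
      (ae_of_all _ fun θ _ => hasSum_one_sub_sqrt_one_sub (by positivity) ((hx θ).trans ht))
    rw [norm_of_nonneg (by have := ha n; positivity)]
    gcongr
    exacts [ha n, hx θ]
  have hsplit :
      ∫ θ in (0 : ℝ)..π / 2, (1 - √(1 - t ^ 2 * sin θ ^ 2)) = π / 2 - ellipticE t := by
    rw [intervalIntegral.integral_sub intervalIntegrable_const
      (by apply Continuous.intervalIntegrable; fun_prop), intervalIntegral.integral_const,
      ellipticE]
    simp
  rw [hsplit] at hF
  convert hF using 2 with n
  simp_rw [mul_pow, ← pow_mul, ← mul_assoc, intervalIntegral.integral_const_mul,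
    integral_sin_pow_even_zero_pi_div_two, ellipticECoeff, a]
  ring

lemma pow_div_lt_ellipticECoeff_mul (n : ℕ) {x : ℝ} (hx : 0 < x) :
    x / ((2 * n + 1) * (2 * n + 3)) < ellipticECoeff n * x := by
  have := two_lt_pi_mul_centralBinomRatio_sq (n + 1)
  push_cast at this
  rw [ellipticECoeff, div_lt_iff₀ (by positivity)]
  field_simp
  nlinarith

lemma ellipticECoeff_mul_lt (n : ℕ) {x : ℝ} (hx : 0 < x) :
    ellipticECoeff n * x < 2 * (x / ((2 * n + 1) * (4 * n + 5))) := by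
  have := pi_mul_centralBinomRatio_sq_lt_four (n + 1)
  push_cast at this
  rw [ellipticECoeff, mul_div_assoc', lt_div_iff₀ (by positivity)]
  field_simp
  nlinarith

theorem stmt_8 (t : ℝ) (ht0 : 0 < t) (ht1 : t < 1) :
    π / 2 - 2 * (∑' i : ℕ, t ^ (2 * (i + 1)) / ((2 * (i + 1 : ℝ) - 1) * (4 * (i + 1 : ℝ) + 1)))
      < (∫ θ in (0:ℝ)..(π / 2), Real.sqrt (1 - t ^ 2 * Real.sin θ ^ 2)) ∧
    (∫ θ in (0:ℝ)..(π / 2), Real.sqrt (1 - t ^ 2 * Real.sin θ ^ 2))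
      < π / 2 - ∑' i : ℕ, t ^ (2 * (i + 1)) / ((2 * (i + 1 : ℝ) - 1) * (2 * (i + 1 : ℝ) + 1)) := by
  show _ < ellipticE t ∧ ellipticE t < _
  have h₁ : ∀ i : ℕ, 2 * ((i : ℝ) + 1) - 1 = 2 * i + 1 := fun i => by ring
  have h₂ : ∀ i : ℕ, 2 * ((i : ℝ) + 1) + 1 = 2 * i + 3 := fun i => by ring
  have h₃ : ∀ i : ℕ, 4 * ((i : ℝ) + 1) + 1 = 4 * i + 5 := fun i => by ring
  simp_rw [h₁, h₂, h₃]
  have hE := hasSum_pi_div_two_sub_ellipticE (t := t) (by nlinarith)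
  have hx : ∀ n : ℕ, 0 < t ^ (2 * (n + 1)) := fun n => pow_pos ht0 _
  have hlower := fun n => pow_div_lt_ellipticECoeff_mul n (hx n)
  have hupper := fun n => ellipticECoeff_mul_lt n (hx n)
  have hlower_summable :=
    hE.summable.of_nonneg_of_le (fun n => by positivity) fun n => (hlower n).le
  have hupper_summable : Summable fun n : ℕ => t ^ (2 * (n + 1)) / ((2 * n + 1) * (4 * n + 5)) :=
    hlower_summable.of_nonneg_of_le (fun n => by positivity) fun n => by gcongr <;> norm_num
  constructor
  · linarith [hasSum_lt (fun n => (hupper n).le) (hupper 0) hE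
      (hupper_summable.hasSum.mul_left 2)]
  · linarith [hasSum_lt (fun n => (hlower n).le) (hlower 0) hlower_summable.hasSum hE]
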